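/- arXiv:1709.01393 — 3 statements merged into one kernel-verified Lean document; each statement's English description precedes it below -/
import Mathlib

section
/- The set {a b^{-1} : a, b ∈ Path(E), r(a) = r(b)} ∪ {0}, with multiplication defined by a b^{-1} · c d^{-1} = a c_1 d^{-1} if c = b c_1, a (d b_1)^{-1} if b = c b_1, and 0 otherwise, is an inverse semigroup in which the inverse of u v^{-1} is v u^{-1}. -/
universe u

/-- A directed graph. -/
structure DiGraph : Type (u + 1) where
  V : Type u
  E : Type u
  s : E → V
  r : E → V

namespace DiGraph

variable (G : DiGraph.{u})

/-- A list of edges forms a valid path starting at vertex `v`. -/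
def Valid (v : G.V) : List G.E → Prop
  | [] => True
  | e :: l => G.s e = v ∧ Valid (G.r e) l

/-- the endpoint of a list of edges starting at `v`. -/
def dst (v : G.V) : List G.E → G.V
  | [] => v
  | e :: l => dst (G.r e) l

variable {G}

lemma dst_append (v : G.V) (l₁ l₂ : List G.E) :
    G.dst v (l₁ ++ l₂) = G.dst (G.dst v l₁) l₂ := by
  induction l₁ generalizing v with
  | nil => rfl
  | cons e t ih => simp [dst, ih]

lemma valid_append (v : G.V) (l₁ l₂ : List G.E) :
    G.Valid v (l₁ ++ l₂) ↔ G.Valid v l₁ ∧ G.Valid (G.dst v l₁) l₂ := by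
  induction l₁ generalizing v with
  | nil => simp [Valid, dst]
  | cons e t ih => simp [Valid, dst, ih, and_assoc]

variable (G) in
/-- A (finite, directed) path in `G`: a source vertex together with a
composable list of edges.  Paths of length zero are the vertices. -/
structure GPath : Type u where
  src : G.V
  edges : List G.E
  valid : G.Valid src edges

/-- The range (end vertex) of a path. -/
def GPath.rng (p : G.GPath) : G.V := G.dst p.src p.edges

/-- Concatenation of composable paths. -/
def GPath.comp (p q : G.GPath) (h : p.rng = q.src) : G.GPath :=
  ⟨p.src, p.edges ++ q.edges, by
    rw [valid_append]
    exact ⟨p.valid, by rw [show G.dst p.src p.edges = q.src from h]; exact q.valid⟩⟩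

lemma GPath.comp_rng (p q : G.GPath) (h : p.rng = q.src) : (p.comp q h).rng = q.rng := by
  show G.dst p.src (p.edges ++ q.edges) = _
  rw [dst_append, show G.dst p.src p.edges = q.src from h]; rfl

/-- If `p` is a prefix of the path `q`, the remaining path (so that
`q = p.comp (p.strip q _ _)`). -/
def GPath.strip (p q : G.GPath) (hs : p.src = q.src) (hp : p.edges <+: q.edges) : G.GPath :=
  ⟨p.rng, q.edges.drop p.edges.length, by
    obtain ⟨t, ht⟩ := hp
    have h1 : p.edges ++ q.edges.drop p.edges.length = q.edges := by
      rw [← ht, List.drop_left]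
    have h2 : G.Valid p.src (p.edges ++ q.edges.drop p.edges.length) := by
      rw [h1, hs]; exact q.valid
    exact ((valid_append _ _ _).mp h2).2⟩

lemma GPath.strip_rng (p q : G.GPath) (hs : p.src = q.src) (hp : p.edges <+: q.edges) :
    (p.strip q hs hp).rng = q.rng := by
  show G.dst p.rng (q.edges.drop p.edges.length) = G.dst q.src q.edges
  obtain ⟨t, ht⟩ := hp
  have h1 : p.edges ++ q.edges.drop p.edges.length = q.edges := by
    rw [← ht, List.drop_left]
  conv_rhs => rw [← hs, ← h1]
  rw [dst_append]; rfl

variable (G) in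
/-- A nonzero element `a b⁻¹` of the graph inverse semigroup: a pair of
paths with the same range. -/
structure NZ : Type u where
  a : G.GPath
  b : G.GPath
  h : a.rng = b.rng

/-- The graph inverse semigroup `G(E)` over a directed graph, in normal form:
the elements `a b⁻¹` with `r(a) = r(b)`, together with a zero element. -/
def GIS (G : DiGraph.{u}) : Type u := Option (NZ G)

instance : Zero (GIS G) := ⟨none⟩

open scoped Classical in
/-- The multiplication of the graph inverse semigroup:
`a b⁻¹ · c d⁻¹ = a c₁ d⁻¹` if `c = b c₁`, `a (d b₁)⁻¹` if `b = c b₁`, and `0` otherwise. -/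
noncomputable instance : Mul (GIS G) :=
  ⟨fun x y =>
    match x, y with
    | none, _ => none
    | some _, none => none
    | some ⟨a, b, hab⟩, some ⟨c, d, hcd⟩ =>
      if h : b.src = c.src ∧ b.edges <+: c.edges then
        some ⟨a.comp (b.strip c h.1 h.2) hab, d, by
          exact (GPath.comp_rng _ _ _).trans ((GPath.strip_rng _ _ _ _).trans hcd)⟩
      else if h' : c.src = b.src ∧ c.edges <+: b.edges then
        some ⟨a, d.comp (c.strip b h'.1 h'.2) hcd.symm, by
          exact hab.trans ((GPath.comp_rng _ _ _).trans (GPath.strip_rng _ _ _ _)).symm⟩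
      else none⟩

/-- The nonzero element `a b⁻¹` of `G(E)` determined by a pair of paths
with the same range. -/
def GIS.nz (n : NZ G) : GIS G := some n

/-- The inversion of the graph inverse semigroup: `(u v⁻¹)⁻¹ = v u⁻¹`. -/
def GIS.inv : GIS G → GIS G
  | none => none
  | some ⟨a, b, h⟩ => some ⟨b, a, h.symm⟩

end DiGraph

/-!
Each nonzero element `a b⁻¹` acts on paths by the partial bijection `b t ↦ a t`, and `0` by the
empty map. This action is faithful and turns the product into composition of partial maps, so
`G(E)` is associative. An idempotent acts injectively and agrees with its own square, so it fixes
every path in its domain; hence idempotents commute. Every `a b⁻¹` has the inverse `b a⁻¹`, and in a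
semigroup whose idempotents commute inverses are unique.
-/

theorem eq_of_isInverse_of_idempotents_commute {S : Type*} [Semigroup S]
    (hcomm : ∀ e f : S, IsIdempotentElem e → IsIdempotentElem f → Commute e f) {x y z : S}
    (hy : x * y * x = x ∧ y * x * y = y) (hz : x * z * x = x ∧ z * x * z = z) : y = z := by
  have idem {s t : S} (h : s * t * s = s) : IsIdempotentElem (t * s) := by
    rw [IsIdempotentElem, mul_assoc, ← mul_assoc s, h]
  have idem' {s t : S} (h : t * s * t = t) : IsIdempotentElem (s * t) := by
    rw [IsIdempotentElem, mul_assoc, ← mul_assoc t, h]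
  have hy' : y = z * x * y := calc
    y = y * x * y := hy.2.symm
    _ = y * (x * z * x) * y := by rw [hz.1]
    _ = y * x * (z * x) * y := by simp only [mul_assoc]
    _ = z * x * (y * x) * y := by rw [(hcomm _ _ (idem hy.1) (idem hz.1)).eq]
    _ = z * x * (y * x * y) := by simp only [mul_assoc]
    _ = z * x * y := by rw [hy.2]
  have hz' : z = z * x * y := calc
    z = z * x * z := hz.2.symm
    _ = z * (x * y * x) * z := by rw [hy.1]
    _ = z * ((x * y) * (x * z)) := by simp only [mul_assoc]
    _ = z * ((x * z) * (x * y)) := by rw [(hcomm _ _ (idem' hy.2) (idem' hz.2)).eq]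
    _ = z * x * z * x * y := by simp only [mul_assoc]
    _ = z * x * y := by rw [hz.2]
  exact hy'.trans hz'.symm

section ReplacePrefix

variable {ι α : Type*}

/- The partial bijection `b t ↦ a t` on paths, encoded as pairs (source, edges): the source is
what tells the paths of length zero apart. -/
open scoped Classical in
noncomputable def replacePrefix (a b p : ι × List α) : Option (ι × List α) :=
  if p.1 = b.1 ∧ b.2 <+: p.2 then some (a.1, a.2 ++ p.2.drop b.2.length) else none

theorem replacePrefix_eq_some_iff {a b p q : ι × List α} :
    replacePrefix a b p = some q ↔
      p.1 = b.1 ∧ q.1 = a.1 ∧ ∃ t, p.2 = b.2 ++ t ∧ q.2 = a.2 ++ t := by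
  obtain ⟨v, l⟩ := p
  obtain ⟨w, m⟩ := q
  unfold replacePrefix
  constructor
  · intro h
    split_ifs at h with hp
    obtain ⟨rfl, t, rfl⟩ := hp
    cases h
    simp
  · rintro ⟨rfl, rfl, t, rfl, rfl⟩
    simp

theorem replacePrefix_self (a b : ι × List α) : replacePrefix a b b = some a := by
  simp [replacePrefix]

theorem replacePrefix_inj {a b p p' q : ι × List α} (h : replacePrefix a b p = some q)
    (h' : replacePrefix a b p' = some q) : p = p' := by
  obtain ⟨hp, -, t, hpt, hqt⟩ := replacePrefix_eq_some_iff.mp h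
  obtain ⟨hp', -, t', hpt', hqt'⟩ := replacePrefix_eq_some_iff.mp h'
  have htt' : t = t' := List.append_cancel_left (hqt.symm.trans hqt')
  exact Prod.ext (hp.trans hp'.symm) (by rw [hpt, hpt', htt'])

theorem replacePrefix_injective₂ :
    Function.Injective2 (replacePrefix : ι × List α → _ → _ → _) := by
  intro a a' b b' h
  obtain ⟨hb, ha, t, hbt, hat⟩ :=
    replacePrefix_eq_some_iff.mp ((congrFun h b).symm.trans (replacePrefix_self a b))
  obtain ⟨-, -, t', hbt', -⟩ :=
    replacePrefix_eq_some_iff.mp ((congrFun h b').trans (replacePrefix_self a' b'))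
  have ht : t = [] := by
    have hlen := congrArg List.length (hbt.trans (congrArg (· ++ t) hbt'))
    simp only [List.length_append] at hlen
    exact List.eq_nil_of_length_eq_zero (by omega)
  subst ht
  simp only [List.append_nil] at hbt hat
  exact ⟨Prod.ext ha hat, Prod.ext hb hbt⟩

theorem bind_replacePrefix_of_le (a b c d : ι × List α) (h : b.1 = c.1 ∧ b.2 <+: c.2)
    (p : ι × List α) :
    (replacePrefix c d p).bind (replacePrefix a b) =
      replacePrefix (a.1, a.2 ++ c.2.drop b.2.length) d p := by
  obtain ⟨b₀, B⟩ := b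
  obtain ⟨c₀, C⟩ := c
  obtain ⟨rfl, C₁, rfl⟩ := h
  unfold replacePrefix
  split_ifs <;> simp_all

theorem bind_replacePrefix_replacePrefix (a b c p : ι × List α) :
    (replacePrefix b c p).bind (replacePrefix a b) = replacePrefix a c p := by
  simpa using bind_replacePrefix_of_le a b b c ⟨rfl, List.prefix_rfl⟩ p

theorem bind_replacePrefix_of_ge (a b c d : ι × List α) (h : c.1 = b.1 ∧ c.2 <+: b.2)
    (p : ι × List α) :
    (replacePrefix c d p).bind (replacePrefix a b) =
      replacePrefix a (d.1, d.2 ++ b.2.drop c.2.length) p := by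
  obtain ⟨b₀, B⟩ := b
  obtain ⟨c₀, C⟩ := c
  obtain ⟨v, l⟩ := p
  obtain ⟨rfl, B₁, rfl⟩ := h
  unfold replacePrefix
  by_cases hl : d.2 <+: l
  · obtain ⟨t, rfl⟩ := hl
    split_ifs <;> simp_all
  · have : ¬(d.2 ++ B₁ <+: l) := fun h' => hl ((List.prefix_append _ _).trans h')
    split_ifs <;> simp_all

theorem bind_replacePrefix_of_not_le_of_not_ge (a b c d : ι × List α)
    (hbc : ¬(b.1 = c.1 ∧ b.2 <+: c.2)) (hcb : ¬(c.1 = b.1 ∧ c.2 <+: b.2)) (p : ι × List α) :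
    (replacePrefix c d p).bind (replacePrefix a b) = none := by
  unfold replacePrefix
  split_ifs
  · rw [Option.bind_some, if_neg]
    rintro ⟨hsrc, hpre⟩
    rcases List.prefix_or_prefix_of_prefix hpre (List.prefix_append _ _) with h | h
    exacts [hbc ⟨hsrc.symm, h⟩, hcb ⟨hsrc, h⟩]
  · rfl

end ReplacePrefix

namespace DiGraph

variable {G : DiGraph.{u}}

def GPath.toPair (p : G.GPath) : G.V × List G.E := (p.src, p.edges)

theorem GPath.toPair_injective : Function.Injective (GPath.toPair : G.GPath → _) := by
  rintro ⟨v, l, _⟩ ⟨v', l', _⟩ h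
  cases h
  rfl

namespace GIS

noncomputable def act : GIS G → G.V × List G.E → Option (G.V × List G.E)
  | none => fun _ => none
  | some n => replacePrefix n.a.toPair n.b.toPair

theorem act_injective : Function.Injective (act : GIS G → _) := by
  rintro (_ | ⟨a, b, hab⟩) (_ | ⟨c, d, hcd⟩) h
  · rfl
  · simpa [act, replacePrefix_self] using congrFun h d.toPair
  · simpa [act, replacePrefix_self] using congrFun h b.toPair
  · obtain ⟨hac, hbd⟩ := replacePrefix_injective₂ h
    cases GPath.toPair_injective hac
    cases GPath.toPair_injective hbd
    rfl

theorem act_mul (x y : GIS G) (p : G.V × List G.E) :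
    act (x * y) p = (act y p).bind (act x) := by
  rcases x with _ | ⟨a, b, hab⟩
  · cases act y p <;> rfl
  rcases y with _ | ⟨c, d, hcd⟩
  · rfl
  simp only [HMul.hMul, Mul.mul]
  by_cases hbc : b.src = c.src ∧ b.edges <+: c.edges
  · simp only [hbc, and_self, ↓reduceDIte]
    exact (bind_replacePrefix_of_le a.toPair b.toPair c.toPair d.toPair hbc p).symm
  by_cases hcb : c.src = b.src ∧ c.edges <+: b.edges
  · simp only [eq_false hbc, ↓reduceDIte]
    simp only [hcb, and_self, ↓reduceDIte]
    exact (bind_replacePrefix_of_ge a.toPair b.toPair c.toPair d.toPair hcb p).symm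
  simp only [eq_false hbc, eq_false hcb, ↓reduceDIte]
  exact
    (bind_replacePrefix_of_not_le_of_not_ge a.toPair b.toPair c.toPair d.toPair hbc hcb p).symm

theorem mul_assoc (x y z : GIS G) : x * y * z = x * (y * z) :=
  act_injective <| funext fun p => by simp only [act_mul, Option.bind_assoc]

theorem eq_of_act_eq_some {e : GIS G} (he : IsIdempotentElem e) {p q : G.V × List G.E}
    (h : act e p = some q) : q = p := by
  have hq : act e q = some q := by
    have hee := act_mul e e p
    rw [he.eq, h, Option.bind_some] at hee
    exact hee.symm
  rcases e with _ | n
  · cases h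
  · exact replacePrefix_inj hq h

theorem commute_of_isIdempotentElem {e f : GIS G} (he : IsIdempotentElem e)
    (hf : IsIdempotentElem f) : Commute e f :=
  act_injective <| funext fun p => by
    rw [act_mul, act_mul]
    rcases hep : act e p with _ | q <;> rcases hfp : act f p with _ | r
    · rfl
    · cases eq_of_act_eq_some hf hfp; simp [hep]
    · cases eq_of_act_eq_some he hep; simp [hfp]
    · cases eq_of_act_eq_some he hep; cases eq_of_act_eq_some hf hfp; simp [hep, hfp]

theorem nz_mul_nz (a b c : G.GPath) (hab : a.rng = b.rng) (hbc : b.rng = c.rng) :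
    nz ⟨a, b, hab⟩ * nz ⟨b, c, hbc⟩ = nz ⟨a, c, hab.trans hbc⟩ :=
  act_injective <| funext fun p =>
    (act_mul _ _ p).trans (bind_replacePrefix_replacePrefix a.toPair b.toPair c.toPair p)

theorem mul_inv_mul_and_inv_mul_inv (x : GIS G) :
    x * inv x * x = x ∧ inv x * x * inv x = inv x := by
  rcases x with _ | ⟨a, b, h⟩
  · exact ⟨rfl, rfl⟩
  · change nz ⟨a, b, h⟩ * nz ⟨b, a, h.symm⟩ * nz ⟨a, b, h⟩ = nz ⟨a, b, h⟩ ∧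
      nz ⟨b, a, h.symm⟩ * nz ⟨a, b, h⟩ * nz ⟨b, a, h.symm⟩ = nz ⟨b, a, h.symm⟩
    simp only [nz_mul_nz, and_self]

end GIS

end DiGraph

open DiGraph in
/-- The set `{a b⁻¹ : a, b ∈ Path(E), r(a) = r(b)} ∪ {0}`, with the
multiplication `a b⁻¹ · c d⁻¹ = a c₁ d⁻¹` if `c = b c₁`, `a (d b₁)⁻¹` if
`b = c b₁`, and `0` otherwise, is an inverse semigroup in which the inverse
of `u v⁻¹` is `v u⁻¹`. -/
theorem gis_isInverseSemigroup (G : DiGraph.{u}) :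
    (∀ x y z : GIS G, x * y * z = x * (y * z)) ∧
    (∀ x : GIS G, ∃! i : GIS G, x * i * x = x ∧ i * x * i = i) ∧
    (∀ x : GIS G, x * GIS.inv x * x = x ∧ GIS.inv x * x * GIS.inv x = GIS.inv x) ∧
    (∀ (u v : G.GPath) (h : u.rng = v.rng),
      GIS.inv (GIS.nz ⟨u, v, h⟩) = GIS.nz ⟨v, u, h.symm⟩) := by
  let _ : Semigroup (GIS G) := { mul_assoc := GIS.mul_assoc }
  refine ⟨GIS.mul_assoc, fun x => ⟨GIS.inv x, GIS.mul_inv_mul_and_inv_mul_inv x, ?_⟩,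
    GIS.mul_inv_mul_and_inv_mul_inv, fun _ _ _ => rfl⟩
  exact fun i hi => eq_of_isInverse_of_idempotents_commute
    (fun _ _ => GIS.commute_of_isIdempotentElem) hi (GIS.mul_inv_mul_and_inv_mul_inv x)
end

section
/- For every directed graph E, the graph inverse semigroup G(E) embeds (as a semigroup, via an injective homomorphism) into the polycyclic monoid P_λ, where λ = max{|E^0|, |E^1|, ω}. -/
universe u

namespace DiGraph

/-- The graph with one vertex and a loop for each element of `ι`. -/
def bouquet (ι : Type u) : DiGraph.{u} :=
  ⟨PUnit, ι, fun _ => PUnit.unit, fun _ => PUnit.unit⟩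

/-- The polycyclic monoid `P_ι` on a set `ι` of generators, realized as the
graph inverse semigroup over the graph with one vertex and `ι` many loops. -/
def PolyM (ι : Type u) : Type u := GIS (bouquet ι)

noncomputable instance (ι : Type u) : Mul (PolyM ι) :=
  inferInstanceAs (Mul (GIS (bouquet ι)))

instance (ι : Type u) : Zero (PolyM ι) := inferInstanceAs (Zero (GIS (bouquet ι)))

end DiGraph

/-!
Code a path `v e₁ ⋯ eₙ` of `E` as the word `v e₁ ⋯ eₙ` over an alphabet `ι` into which
`E⁰` and `E¹` inject, i.e. as a path in the bouquet of `ι` loops. Coding is injective and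
preserves and reflects the prefix order, and it commutes with "concatenate with what is left
after stripping a prefix". Products in `G(E)` and in `P_ι = G(bouquet ι)` are both computed
by the same prefix rule (`a b⁻¹ · c d⁻¹` is nonzero only if one of `b`, `c` is a prefix of the
other), so `a b⁻¹ ↦ code(a) code(b)⁻¹` is an injective homomorphism.
-/

open Cardinal

namespace DiGraph

variable {G : DiGraph.{u}}

@[ext]
lemma GPath.ext {p q : G.GPath} (hsrc : p.src = q.src) (hedges : p.edges = q.edges) :
    p = q := by
  cases p; cases q; cases hsrc; cases hedges; rfl

@[ext]
lemma NZ.ext {x y : NZ G} (ha : x.a = y.a) (hb : x.b = y.b) : x = y := by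
  cases x; cases y; cases ha; cases hb; rfl

lemma valid_bouquet {ι : Type u} (v : (bouquet ι).V) (l : List (bouquet ι).E) :
    (bouquet ι).Valid v l := by
  induction l generalizing v with
  | nil => trivial
  | cons e t ih => exact ⟨rfl, ih _⟩

lemma GIS.nz_mul_nz_of_prefix {a b c d : G.GPath} {hab : a.rng = b.rng}
    {hcd : c.rng = d.rng} (h : b.src = c.src ∧ b.edges <+: c.edges) :
    GIS.nz ⟨a, b, hab⟩ * GIS.nz ⟨c, d, hcd⟩ =
      GIS.nz ⟨a.comp (b.strip c h.1 h.2) hab, d,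
        (GPath.comp_rng _ _ _).trans ((GPath.strip_rng _ _ _ _).trans hcd)⟩ :=
  dif_pos h

lemma GIS.nz_mul_nz_of_prefix' {a b c d : G.GPath} {hab : a.rng = b.rng}
    {hcd : c.rng = d.rng} (hbc : ¬(b.src = c.src ∧ b.edges <+: c.edges))
    (hcb : c.src = b.src ∧ c.edges <+: b.edges) :
    GIS.nz ⟨a, b, hab⟩ * GIS.nz ⟨c, d, hcd⟩ =
      GIS.nz ⟨a, d.comp (c.strip b hcb.1 hcb.2) hcd.symm,
        hab.trans ((GPath.comp_rng _ _ _).trans (GPath.strip_rng _ _ _ _)).symm⟩ :=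
  (dif_neg hbc).trans (dif_pos hcb)

lemma GIS.nz_mul_nz_of_not_prefix {a b c d : G.GPath} {hab : a.rng = b.rng}
    {hcd : c.rng = d.rng} (hbc : ¬(b.src = c.src ∧ b.edges <+: c.edges))
    (hcb : ¬(c.src = b.src ∧ c.edges <+: b.edges)) :
    GIS.nz ⟨a, b, hab⟩ * GIS.nz ⟨c, d, hcd⟩ = 0 :=
  (dif_neg hbc).trans (dif_neg hcb)

section Encoding

variable {ι : Type u} (cV : G.V → ι) (cE : G.E → ι)

/-- The leading vertex letter keeps empty paths apart and forces equal sources in the prefix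
order, even where the codes of vertices and edges overlap in `ι`. -/
def GPath.encode (p : G.GPath) : (bouquet ι).GPath :=
  ⟨PUnit.unit, cV p.src :: p.edges.map cE, valid_bouquet _ _⟩

def GIS.encode : GIS G → GIS (bouquet ι)
  | none => 0
  | some n => GIS.nz ⟨n.a.encode cV cE, n.b.encode cV cE, rfl⟩

variable {cV cE}

lemma GPath.encode_injective (hV : Function.Injective cV) (hE : Function.Injective cE) :
    Function.Injective (GPath.encode (G := G) cV cE) := by
  intro p q h
  have hedges : cV p.src :: p.edges.map cE = cV q.src :: q.edges.map cE :=
    congrArg GPath.edges h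
  simp only [List.cons.injEq, hV.eq_iff, List.map_inj_right hE] at hedges
  exact GPath.ext hedges.1 hedges.2

lemma GIS.encode_injective (hV : Function.Injective cV) (hE : Function.Injective cE) :
    Function.Injective (GIS.encode (G := G) cV cE) := by
  rintro (_ | ⟨a, b, _⟩) (_ | ⟨c, d, _⟩) h
  · rfl
  · cases h
  · cases h
  · obtain ⟨ha, hb⟩ := NZ.mk.inj (Option.some.inj h)
    obtain rfl : a = c := GPath.encode_injective hV hE ha
    obtain rfl : b = d := GPath.encode_injective hV hE hb
    rfl

lemma GPath.encode_prefix_iff (hV : Function.Injective cV) (hE : Function.Injective cE)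
    (b c : G.GPath) :
    ((b.encode cV cE).src = (c.encode cV cE).src ∧
      (b.encode cV cE).edges <+: (c.encode cV cE).edges) ↔
    b.src = c.src ∧ b.edges <+: c.edges := by
  refine (and_iff_right rfl).trans ?_
  change (cV b.src :: b.edges.map cE : List ι) <+: cV c.src :: c.edges.map cE ↔ _
  rw [List.cons_prefix_cons, hV.eq_iff, List.prefix_map_iff_of_injective hE]

lemma GPath.encode_comp_strip (a b c : G.GPath) (hab : a.rng = b.rng)
    (h : b.src = c.src ∧ b.edges <+: c.edges)
    (h' : (b.encode cV cE).src = (c.encode cV cE).src ∧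
      (b.encode cV cE).edges <+: (c.encode cV cE).edges) :
    (a.encode cV cE).comp ((b.encode cV cE).strip (c.encode cV cE) h'.1 h'.2) rfl
      = (a.comp (b.strip c h.1 h.2) hab).encode cV cE := by
  refine GPath.ext rfl ?_
  change (cV a.src :: a.edges.map cE : List ι) ++ (cV c.src :: c.edges.map cE).drop
    (b.edges.map cE).length.succ = cV a.src :: (a.edges ++ c.edges.drop b.edges.length).map cE
  simp

lemma GIS.encode_mul (hV : Function.Injective cV) (hE : Function.Injective cE) (x y : GIS G) :
    GIS.encode cV cE (x * y) = GIS.encode cV cE x * GIS.encode cV cE y := by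
  rcases x with _ | ⟨a, b, hab⟩
  · rfl
  rcases y with _ | ⟨c, d, hcd⟩
  · rfl
  change GIS.encode cV cE (GIS.nz ⟨a, b, hab⟩ * GIS.nz ⟨c, d, hcd⟩) =
      GIS.nz ⟨a.encode cV cE, b.encode cV cE, rfl⟩ *
        GIS.nz ⟨c.encode cV cE, d.encode cV cE, rfl⟩
  have hpre := GPath.encode_prefix_iff hV hE
  by_cases hbc : b.src = c.src ∧ b.edges <+: c.edges
  · rw [GIS.nz_mul_nz_of_prefix hbc]
    refine .trans ?_ (GIS.nz_mul_nz_of_prefix ((hpre b c).2 hbc)).symm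
    exact congrArg GIS.nz
      (NZ.ext (GPath.encode_comp_strip a b c hab hbc ((hpre b c).2 hbc)).symm rfl)
  by_cases hcb : c.src = b.src ∧ c.edges <+: b.edges
  · rw [GIS.nz_mul_nz_of_prefix' hbc hcb]
    refine .trans ?_
      (GIS.nz_mul_nz_of_prefix' (mt (hpre b c).1 hbc) ((hpre c b).2 hcb)).symm
    exact congrArg GIS.nz
      (NZ.ext rfl (GPath.encode_comp_strip d c b hcd.symm hcb ((hpre c b).2 hcb)).symm)
  rw [GIS.nz_mul_nz_of_not_prefix hbc hcb]
  exact (GIS.nz_mul_nz_of_not_prefix (mt (hpre b c).1 hbc) (mt (hpre c b).1 hcb)).symm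

end Encoding

theorem GIS.exists_injective_mulHom_polyM {ι : Type u} (hV : #G.V ≤ #ι) (hE : #G.E ≤ #ι) :
    ∃ f : GIS G →ₙ* PolyM ι, Function.Injective f := by
  obtain ⟨cV⟩ := (Cardinal.le_def _ _).1 hV
  obtain ⟨cE⟩ := (Cardinal.le_def _ _).1 hE
  exact ⟨⟨GIS.encode cV cE, GIS.encode_mul cV.injective cE.injective⟩,
    GIS.encode_injective cV.injective cE.injective⟩

end DiGraph

open DiGraph in
/-- For every directed graph `E`, the graph inverse semigroup `G(E)` embeds
(via an injective homomorphism) into the polycyclic monoid `P_λ`, where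
`λ = max{|E⁰|, |E¹|, ω}`. -/
theorem gis_embeds_polycyclic (G : DiGraph.{u}) :
    ∃ f : GIS G →ₙ* PolyM ((max (max (Cardinal.mk G.V) (Cardinal.mk G.E)) Cardinal.aleph0).out),
      Function.Injective f := by
  apply GIS.exists_injective_mulHom_polyM <;> rw [Cardinal.mk_out]
  · exact le_max_of_le_left (le_max_left _ _)
  · exact le_max_of_le_left (le_max_right _ _)
end

section
/- Every graph inverse semigroup G(E) over a countable graph E (i.e., with countably many vertices and edges) embeds into the polycyclic monoid P_2. -/
universe u

/-!
Code every vertex and edge of the countable graph by a distinct word `1ⁿ0` over `{0, 1}` and a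
path by the concatenation of the codes of its source and its edges. Since `{1ⁿ0}` is a prefix
code, one path is a prefix of another exactly when its code is a prefix of the other's code, and
concatenating paths concatenates their codes. The multiplication of `G(E)` in normal form only
compares paths in the prefix order and concatenates them, so `a b⁻¹ ↦ w(a) w(b)⁻¹` is an
injective homomorphism into `P₂`.
-/

theorem List.prefix_of_flatMap_prefix_flatMap {α β : Type*} {c : α → List β}
    (hc : ∀ a b u v, c a ++ u <+: c b ++ v → a = b ∧ u <+: v) (hne : ∀ a, c a ≠ []) :
    ∀ {l₁ l₂ : List α}, l₁.flatMap c <+: l₂.flatMap c → l₁ <+: l₂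
  | [], _, _ => List.nil_prefix
  | a :: l₁, [], h => absurd (List.prefix_nil.mp h) (by simp [hne a])
  | a :: l₁, b :: l₂, h => by
    obtain ⟨rfl, hl⟩ := hc a b (l₁.flatMap c) (l₂.flatMap c) h
    exact List.cons_prefix_cons.mpr ⟨rfl, List.prefix_of_flatMap_prefix_flatMap hc hne hl⟩

namespace DiGraph

universe v

variable {G : DiGraph.{u}}

attribute [ext] GPath NZ

lemma GPath.comp_strip (p q : G.GPath) (hs : p.src = q.src) (hp : p.edges <+: q.edges) :
    p.comp (p.strip q hs hp) rfl = q :=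
  GPath.ext hs (List.prefix_iff_eq_append.mp hp)

namespace GIS

lemma nz_mul_nz_of_prefix_s3 (n m : NZ G) (h : n.b.src = m.a.src ∧ n.b.edges <+: m.a.edges) :
    nz n * nz m = nz ⟨n.a.comp (n.b.strip m.a h.1 h.2) n.h, m.b,
      (GPath.comp_rng _ _ _).trans ((GPath.strip_rng _ _ _ _).trans m.h)⟩ := by
  obtain ⟨a, b, hab⟩ := n
  obtain ⟨c, d, hcd⟩ := m
  exact dif_pos h

lemma nz_mul_nz_of_not_prefix_of_prefix (n m : NZ G)
    (h : ¬(n.b.src = m.a.src ∧ n.b.edges <+: m.a.edges))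
    (h' : m.a.src = n.b.src ∧ m.a.edges <+: n.b.edges) :
    nz n * nz m = nz ⟨n.a, m.b.comp (m.a.strip n.b h'.1 h'.2) m.h.symm,
      n.h.trans ((GPath.comp_rng _ _ _).trans (GPath.strip_rng _ _ _ _)).symm⟩ := by
  obtain ⟨a, b, hab⟩ := n
  obtain ⟨c, d, hcd⟩ := m
  exact (dif_neg h).trans (dif_pos h')

lemma nz_mul_nz_of_not_prefix_of_not_prefix (n m : NZ G)
    (h : ¬(n.b.src = m.a.src ∧ n.b.edges <+: m.a.edges))
    (h' : ¬(m.a.src = n.b.src ∧ m.a.edges <+: n.b.edges)) :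
    nz n * nz m = 0 := by
  obtain ⟨a, b, hab⟩ := n
  obtain ⟨c, d, hcd⟩ := m
  exact (dif_neg h).trans (dif_neg h')

end GIS

lemma bouquet_valid {ι : Type u} : ∀ (v : (bouquet ι).V) (l : List ι), (bouquet ι).Valid v l
  | _, [] => trivial
  | _, _ :: l => ⟨rfl, bouquet_valid _ l⟩

namespace PolyM

variable {ι : Type u}

/-- The element `u v⁻¹` of `P_ι`. -/
def mk (u v : List ι) : PolyM ι :=
  GIS.nz ⟨⟨PUnit.unit, u, bouquet_valid _ u⟩, ⟨PUnit.unit, v, bouquet_valid _ v⟩, rfl⟩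

lemma mk_mul_mk_of_prefix (u v x y : List ι) (h : v <+: x) :
    mk u v * mk x y = mk (u ++ x.drop v.length) y :=
  GIS.nz_mul_nz_of_prefix_s3 _ _ ⟨rfl, h⟩

lemma mk_mul_mk_of_not_prefix_of_prefix (u v x y : List ι) (h : ¬v <+: x) (h' : x <+: v) :
    mk u v * mk x y = mk u (y ++ v.drop x.length) :=
  GIS.nz_mul_nz_of_not_prefix_of_prefix _ _ (fun h'' => h h''.2) ⟨rfl, h'⟩

lemma mk_mul_mk_of_not_prefix_of_not_prefix (u v x y : List ι) (h : ¬v <+: x)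
    (h' : ¬x <+: v) :
    mk u v * mk x y = 0 :=
  GIS.nz_mul_nz_of_not_prefix_of_not_prefix _ _ (fun h'' => h h''.2) (fun h'' => h' h''.2)

lemma mk_ne_zero (u v : List ι) : mk u v ≠ 0 :=
  Option.some_ne_none _

lemma mk_inj {u v u' v' : List ι} : mk u v = mk u' v' ↔ u = u' ∧ v = v' := by
  refine ⟨fun h => ?_, fun ⟨hu, hv⟩ => hu ▸ hv ▸ rfl⟩
  have h := Option.some.inj h
  exact ⟨congrArg (GPath.edges ∘ NZ.a) h, congrArg (GPath.edges ∘ NZ.b) h⟩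

end PolyM

structure PathCode (G : DiGraph.{u}) (ι : Type v) where
  word : G.GPath → List ι
  edgeWord : List G.E → List ι
  word_prefix_word_iff : ∀ p q, word p <+: word q ↔ p.src = q.src ∧ p.edges <+: q.edges
  word_comp : ∀ p q h, word (p.comp q h) = word p ++ edgeWord q.edges

namespace PathCode

variable {ι : Type v} (c : PathCode G ι)

lemma word_injective : Function.Injective c.word := fun p q h => by
  obtain ⟨hs, hpq⟩ := (c.word_prefix_word_iff p q).mp (h ▸ List.prefix_rfl)
  obtain ⟨-, hqp⟩ := (c.word_prefix_word_iff q p).mp (h ▸ List.prefix_rfl)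
  exact GPath.ext hs (hpq.sublist.antisymm hqp.sublist)

lemma word_comp_strip (a b d : G.GPath) (hs : b.src = d.src) (hp : b.edges <+: d.edges)
    (h : a.rng = (b.strip d hs hp).src) :
    c.word (a.comp (b.strip d hs hp) h) = c.word a ++ (c.word d).drop (c.word b).length := by
  have hd : c.word d = c.word b ++ c.edgeWord (b.strip d hs hp).edges := by
    conv_lhs => rw [← b.comp_strip d hs hp]
    exact c.word_comp _ _ _
  rw [c.word_comp, hd, List.drop_left]

def toPolyMFun : GIS G → PolyM ι
  | none => 0
  | some n => PolyM.mk (c.word n.a) (c.word n.b)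

lemma toPolyMFun_nz (n : NZ G) :
    c.toPolyMFun (GIS.nz n) = PolyM.mk (c.word n.a) (c.word n.b) := rfl

lemma toPolyMFun_nz_mul_nz (n m : NZ G) :
    c.toPolyMFun (GIS.nz n * GIS.nz m) = c.toPolyMFun (GIS.nz n) * c.toPolyMFun (GIS.nz m) := by
  have key := c.word_prefix_word_iff
  simp only [toPolyMFun_nz]
  by_cases h : n.b.src = m.a.src ∧ n.b.edges <+: m.a.edges
  · rw [GIS.nz_mul_nz_of_prefix_s3 n m h, PolyM.mk_mul_mk_of_prefix _ _ _ _ ((key _ _).mpr h)]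
    exact congrArg (PolyM.mk · _) (c.word_comp_strip _ _ _ _ _ n.h)
  by_cases h' : m.a.src = n.b.src ∧ m.a.edges <+: n.b.edges
  · rw [GIS.nz_mul_nz_of_not_prefix_of_prefix n m h h',
      PolyM.mk_mul_mk_of_not_prefix_of_prefix _ _ _ _ (mt (key _ _).mp h) ((key _ _).mpr h')]
    exact congrArg (PolyM.mk _) (c.word_comp_strip _ _ _ _ _ m.h.symm)
  · rw [GIS.nz_mul_nz_of_not_prefix_of_not_prefix n m h h',
      PolyM.mk_mul_mk_of_not_prefix_of_not_prefix _ _ _ _ (mt (key _ _).mp h)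
        (mt (key _ _).mp h')]
    rfl

def toPolyM : GIS G →ₙ* PolyM ι where
  toFun := c.toPolyMFun
  map_mul' := by
    rintro (_ | n) (_ | m)
    any_goals rfl
    exact c.toPolyMFun_nz_mul_nz n m

lemma toPolyM_injective : Function.Injective c.toPolyM := by
  rintro (_ | n) (_ | m) h
  · rfl
  · exact absurd h.symm (PolyM.mk_ne_zero _ _)
  · exact absurd h (PolyM.mk_ne_zero _ _)
  · obtain ⟨ha, hb⟩ := PolyM.mk_inj.mp h
    exact congrArg some (NZ.ext (c.word_injective ha) (c.word_injective hb))

end PathCode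

def unaryCode (n : ℕ) : List Bool := List.replicate n true ++ [false]

lemma unaryCode_ne_nil (n : ℕ) : unaryCode n ≠ [] := by simp [unaryCode]

lemma unaryCode_append_prefix : ∀ (m n : ℕ) (u v : List Bool),
    unaryCode m ++ u <+: unaryCode n ++ v → m = n ∧ u <+: v
  | 0, 0, _, _, h => by simpa [unaryCode] using h
  | 0, _ + 1, _, _, h => by simp [unaryCode, List.replicate_succ] at h
  | _ + 1, 0, _, _, h => by simp [unaryCode, List.replicate_succ] at h
  | m + 1, n + 1, u, v, h => by
    simp only [unaryCode, List.replicate_succ, List.cons_append, List.cons_prefix_cons] at h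
    simpa using unaryCode_append_prefix m n u v h.2

def PathCode.unary (κ : G.V ⊕ G.E → ℕ) (hκ : Function.Injective κ) : PathCode G Bool where
  word p := (Sum.inl p.src :: p.edges.map Sum.inr).flatMap (unaryCode ∘ κ)
  edgeWord l := (l.map Sum.inr).flatMap (unaryCode ∘ κ)
  word_prefix_word_iff p q := by
    have hc : ∀ a b u v, (unaryCode ∘ κ) a ++ u <+: (unaryCode ∘ κ) b ++ v →
        a = b ∧ u <+: v :=
      fun a b u v h => (unaryCode_append_prefix _ _ u v h).imp_left (hκ ·)
    refine ⟨fun h => ?_, fun ⟨hs, he⟩ => ?_⟩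
    · obtain ⟨hs, he⟩ := List.cons_prefix_cons.mp
        (List.prefix_of_flatMap_prefix_flatMap hc (fun _ => unaryCode_ne_nil _) h)
      exact ⟨Sum.inl_injective hs, (List.prefix_map_iff_of_injective Sum.inr_injective).mp he⟩
    · rw [hs]
      exact (List.cons_prefix_cons.mpr ⟨rfl, he.map _⟩).flatMap _
  word_comp p q h := by
    show List.flatMap _ _ = List.flatMap _ _ ++ List.flatMap _ _
    simp [GPath.comp]

end DiGraph

open DiGraph in
/-- Every graph inverse semigroup `G(E)` over a countable graph `E` (countably
many vertices and edges) embeds into the polycyclic monoid `P₂`. -/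
theorem gis_countable_embeds_poly_two (G : DiGraph.{0})
    [Countable G.V] [Countable G.E] :
    ∃ f : GIS G →ₙ* PolyM Bool, Function.Injective f := by
  obtain ⟨κ, hκ⟩ := Countable.exists_injective_nat (G.V ⊕ G.E)
  exact ⟨(PathCode.unary κ hκ).toPolyM, (PathCode.unary κ hκ).toPolyM_injective⟩
end
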